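/- arXiv:1805.07048 — 5 statements merged into one kernel-verified Lean document; each statement's English description precedes it below -/
import Mathlib

section
/- Suppose (p_i : i < κ) is a sequence of conditions in Q_D such that (1) p_i ≤^pr p_j whenever i < j < κ, and (2) for every i < κ, if i ∈ A_{p_j} for all j < i and i > sup(u_{p_0}), then i ∈ A_{p_j} for every j with i ≤ j < κ. Then the sequence has an upper bound in Q_D; in fact the pair (u_{p_0}, Δ \ (sup(u_{p_0})+1)) is an upper bound, where Δ = {α < κ : α ∈ A_{p_i} for all i < α} is the diagonal intersection of the sets A_{p_i}. -/
open Set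

/-- A normal ultrafilter on the set of ordinals below `κ.ord`. -/
structure NormalUltrafilterOn (κ : Cardinal.{0}) where
  sets : Set (Set Ordinal)
  mem_subset : ∀ A ∈ sets, A ⊆ Set.Iio κ.ord
  univ_mem : Set.Iio κ.ord ∈ sets
  empty_not_mem : ∅ ∉ sets
  superset_mem : ∀ A B : Set Ordinal, A ∈ sets → A ⊆ B → B ⊆ Set.Iio κ.ord → B ∈ sets
  ultra : ∀ A : Set Ordinal, A ⊆ Set.Iio κ.ord → A ∈ sets ∨ (Set.Iio κ.ord \ A) ∈ sets
  complete : ∀ S : Set (Set Ordinal), S ⊆ sets → S.Nonempty →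
    Cardinal.mk S < Cardinal.lift.{1} κ → ⋂₀ S ∈ sets
  nonprincipal : ∀ α : Ordinal, (Set.Iio κ.ord \ {α}) ∈ sets
  normal : ∀ f : Ordinal → Ordinal, ∀ A ∈ sets, (∀ α ∈ A, f α < α) →
    ∃ B ∈ sets, ∃ γ : Ordinal, ∀ α ∈ B, f α = γ

/-- A condition in the forcing `Q_D`. -/
structure QCond (κ : Cardinal.{0}) (D : NormalUltrafilterOn κ) where
  u : Set Ordinal
  A : Set Ordinal
  u_subset : u ⊆ Set.Iio κ.ord
  u_small : Cardinal.mk u < Cardinal.lift.{1} κ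
  A_mem : A ∈ D.sets

/-- The order of `Q_D`. -/
def QLE {κ : Cardinal.{0}} {D : NormalUltrafilterOn κ} (p q : QCond κ D) : Prop :=
  p.u ⊆ q.u ∧ q.A ⊆ p.A ∧ q.u \ p.u ⊆ p.A ∧ ∀ α ∈ p.u, ∀ β ∈ q.u \ p.u, α < β

/-- The pure extension order of `Q_D`: `p ≤^pr q` iff `p ≤ q` and `u_p = u_q`. -/
def QLEpr {κ : Cardinal.{0}} {D : NormalUltrafilterOn κ} (p q : QCond κ D) : Prop :=
  QLE p q ∧ p.u = q.u

/-!
Normality of `D` makes the diagonal intersection `Δ` of the sets `A_{p_i}` a member of `D`: if its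
complement were in `D`, choosing for each `α` outside `Δ` some `j < α` with `α ∉ A_{p_j}` would give
a regressive function, constant with value `γ` on a set in `D`, contradicting `A_{p_γ} ∈ D`.
Removing the bounded set `sSup u_{p_0} + 1` keeps `Δ` in `D`, since `κ`-completeness forces
`sSup u_{p_0} < κ`. All `u_{p_i}` equal `u_{p_0}`, so being above `p_i` only requires
`Δ \ (sSup u_{p_0} + 1) ⊆ A_{p_i}`: for `α ≤ i` this is hypothesis (2), for `α > i` the
definition of `Δ`.
-/

def diagInter (κ : Cardinal.{0}) (A : ∀ j, j < κ.ord → Set Ordinal) : Set Ordinal :=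
  {α | α < κ.ord ∧ ∀ j (hj : j < κ.ord), j < α → α ∈ A j hj}

namespace NormalUltrafilterOn

variable {κ : Cardinal.{0}} (D : NormalUltrafilterOn κ)

theorem nonempty_of_mem {A : Set Ordinal} (hA : A ∈ D.sets) : A.Nonempty :=
  nonempty_iff_ne_empty.2 fun h => D.empty_not_mem (h ▸ hA)

theorem inter_mem (hκ : Cardinal.aleph0 < κ) {A B : Set Ordinal} (hA : A ∈ D.sets)
    (hB : B ∈ D.sets) : A ∩ B ∈ D.sets := by
  have hsmall : Cardinal.mk ({A, B} : Set (Set Ordinal)) < Cardinal.lift.{1} κ :=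
    ((toFinite _).lt_aleph0).trans (by simpa using Cardinal.lift_strictMono.{0, 1} hκ)
  simpa using D.complete {A, B} (by rintro X (rfl | rfl) <;> assumption) (insert_nonempty _ _) hsmall

theorem biInter_mem {v : Set Ordinal} (hv : v.Nonempty)
    (hsmall : Cardinal.mk v < Cardinal.lift.{1} κ) {F : Ordinal → Set Ordinal}
    (hF : ∀ b ∈ v, F b ∈ D.sets) : ⋂ b ∈ v, F b ∈ D.sets := by
  rw [← sInter_image]
  exact D.complete _ (by rintro _ ⟨b, hb, rfl⟩; exact hF b hb) (hv.image F)
    (Cardinal.mk_image_le.trans_lt hsmall)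

theorem compl_mem_of_small {T : Set Ordinal} (hT : Cardinal.mk T < Cardinal.lift.{1} κ) :
    Iio κ.ord \ T ∈ D.sets := by
  rcases T.eq_empty_or_nonempty with rfl | hne
  · simpa using D.univ_mem
  · have h := D.biInter_mem hne hT fun a _ => D.nonprincipal a
    have heq : ⋂ a ∈ T, Iio κ.ord \ {a} = Iio κ.ord \ T := by
      ext x
      simp only [mem_iInter, mem_sdiff, mem_singleton_iff]
      exact ⟨fun h => ⟨(h _ hne.some_mem).1, fun hx => (h x hx).2 rfl⟩,
        fun ⟨hx, hxT⟩ a ha => ⟨hx, fun hxa => hxT (hxa ▸ ha)⟩⟩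
    rwa [heq] at h

theorem diff_Iio_mem (hκ : Cardinal.aleph0 < κ) {A : Set Ordinal} (hA : A ∈ D.sets)
    {β : Ordinal} (hβ : β < κ.ord) : A \ Iio β ∈ D.sets := by
  have hsmall : Cardinal.mk (Iio β) < Cardinal.lift.{1} κ := by
    rw [Cardinal.mk_Iio_ordinal]
    exact Cardinal.lift_lt.2 (Cardinal.lt_ord.1 hβ)
  have h := D.inter_mem hκ hA (D.compl_mem_of_small hsmall)
  rwa [← inter_sdiff_assoc, inter_eq_left.2 (D.mem_subset A hA)] at h

/-- `κ`-completeness makes `κ` regular: every small set of ordinals below `κ` is bounded. -/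
theorem sSup_lt_ord (D : NormalUltrafilterOn κ) (hκ : Cardinal.aleph0 < κ) {v : Set Ordinal}
    (hv : v ⊆ Iio κ.ord) (hsmall : Cardinal.mk v < Cardinal.lift.{1} κ) : sSup v < κ.ord := by
  have hlim := Cardinal.isSuccLimit_ord hκ.le
  rcases v.eq_empty_or_nonempty with rfl | hne
  · simpa using hlim.bot_lt
  · have hmem := D.biInter_mem hne hsmall fun b hb =>
      D.diff_Iio_mem hκ D.univ_mem (hlim.succ_lt (hv hb))
    obtain ⟨x, hx⟩ := D.nonempty_of_mem hmem
    simp only [mem_iInter, mem_sdiff, mem_Iio, not_lt] at hx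
    exact (csSup_le hne fun b hb => (Order.le_succ b).trans (hx b hb).2).trans_lt
      (hx _ hne.some_mem).1

theorem diagInter_mem (hκ : Cardinal.aleph0 < κ) (A : ∀ j, j < κ.ord → Set Ordinal)
    (hA : ∀ j hj, A j hj ∈ D.sets) : diagInter κ A ∈ D.sets := by
  by_contra hΔ
  have hC : Iio κ.ord \ diagInter κ A ∈ D.sets :=
    (D.ultra _ fun α hα => hα.1).resolve_left hΔ
  have hwit : ∀ α ∈ Iio κ.ord \ diagInter κ A, ∃ j, j < α ∧ ∃ hj : j < κ.ord, α ∉ A j hj := by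
    rintro α ⟨hακ, hαΔ⟩
    by_contra! h
    exact hαΔ ⟨hακ, fun j hj hjα => h j hjα hj⟩
  choose! f hf_lt hf_out using hwit
  obtain ⟨B, hB, γ, hγ⟩ := D.normal f _ hC hf_lt
  have hBC := D.inter_mem hκ hB hC
  obtain ⟨α₀, hα₀B, hα₀C⟩ := D.nonempty_of_mem hBC
  have hγκ : γ < κ.ord := hγ α₀ hα₀B ▸ (hf_lt α₀ hα₀C).trans hα₀C.1
  obtain ⟨α, ⟨hαB, hαC⟩, hαA⟩ := D.nonempty_of_mem (D.inter_mem hκ hBC (hA γ hγκ))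
  obtain ⟨hj, hαA'⟩ := hf_out α hαC
  obtain rfl : f α = γ := hγ α hαB
  exact hαA' hαA

end NormalUltrafilterOn

theorem QLE_of_u_eq {κ : Cardinal.{0}} {D : NormalUltrafilterOn κ} {p q : QCond κ D}
    (hu : p.u = q.u) (hA : q.A ⊆ p.A) : QLE p q :=
  ⟨hu.le, hA, by simp [hu], by simp [hu]⟩

theorem stmt1 (κ : Cardinal.{0}) (hκ : Cardinal.aleph0 < κ) (D : NormalUltrafilterOn κ)
    (h0 : (0 : Ordinal) < κ.ord)
    (p : ∀ i, i < κ.ord → QCond κ D)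
    (hpr : ∀ i j (hi : i < κ.ord) (hj : j < κ.ord), i < j → QLEpr (p i hi) (p j hj))
    (hcoh : ∀ i, i < κ.ord → (∀ j (hj : j < κ.ord), j < i → i ∈ (p j hj).A) →
      sSup (p 0 h0).u < i → ∀ j (hj : j < κ.ord), i ≤ j → i ∈ (p j hj).A) :
    ∃ q : QCond κ D,
      q.u = (p 0 h0).u ∧
      q.A = {α | α < κ.ord ∧ ∀ j (hj : j < κ.ord), j < α → α ∈ (p j hj).A} \
              Set.Iio (sSup (p 0 h0).u + 1) ∧
      ∀ i (hi : i < κ.ord), QLE (p i hi) q := by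
  set s := sSup (p 0 h0).u
  have hs : s + 1 < κ.ord := (Cardinal.isSuccLimit_ord hκ.le).succ_lt
    (D.sSup_lt_ord hκ (p 0 h0).u_subset (p 0 h0).u_small)
  have hu : ∀ i (hi : i < κ.ord), (p i hi).u = (p 0 h0).u := by
    intro i hi
    rcases eq_or_ne i 0 with rfl | hi0
    · rfl
    · exact (hpr 0 i h0 hi (pos_iff_ne_zero.2 hi0)).2.symm
  have hA := D.diff_Iio_mem hκ (D.diagInter_mem hκ _ fun j hj => (p j hj).A_mem) hs
  refine ⟨⟨(p 0 h0).u, _, (p 0 h0).u_subset, (p 0 h0).u_small, hA⟩, rfl, rfl,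
    fun i hi => QLE_of_u_eq (hu i hi) ?_⟩
  rintro α ⟨⟨hακ, hbelow⟩, hαs⟩
  rcases lt_or_ge i α with hiα | hαi
  · exact hbelow i hi hiα
  · exact hcoh α hακ hbelow (Order.add_one_le_iff.1 (not_lt.1 hαs)) i hi hαi
end

section
/- For every X ⊆ κ and every A ∈ D there exists B ∈ D with B ⊆ A such that either F(i,α) ∈ X for all i < α with i, α ∈ B, or F(i,α) ∉ X for all i < α with i, α ∈ B. -/
open Set

/-- `Fseq A i α` is `F(i,α)`: the `α`-th element, in increasing order, of the set
`A i \ ⋃ j < i, A j`. -/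
noncomputable def Fseq (A : Ordinal → Set Ordinal) (i α : Ordinal) : Ordinal :=
  Ordinal.enumOrd (A i \ ⋃ j < i, A j) α

/-- `Sset A C` is `S_C = {F(i,α) : i < α and i, α ∈ C}`. -/
def Sset (A : Ordinal → Set Ordinal) (C : Set Ordinal) : Set Ordinal :=
  {β | ∃ i α, i ∈ C ∧ α ∈ C ∧ i < α ∧ Fseq A i α = β}

/-- `Eset κ D A` is `E = {Y ⊆ κ : there exists C ∈ D such that S_C ⊆ Y}`. -/
def Eset (κ : Cardinal.{0}) (D : NormalUltrafilterOn κ) (A : Ordinal → Set Ordinal) :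
    Set (Set Ordinal) :=
  {Y | Y ⊆ Set.Iio κ.ord ∧ ∃ C ∈ D.sets, Sset A C ⊆ Y}

lemma NU.inter_mem {κ : Cardinal.{0}} (hκ : Cardinal.aleph0 < κ) (D : NormalUltrafilterOn κ)
    {A B : Set Ordinal} (hA : A ∈ D.sets) (hB : B ∈ D.sets) : A ∩ B ∈ D.sets := by
  have h := D.complete {A, B} (by rintro x (rfl | rfl) <;> assumption) ⟨A, by simp⟩ ?_
  · rwa [Set.sInter_pair] at h
  · have h2 : Cardinal.mk ({A, B} : Set (Set Ordinal)) ≤ 2 := by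
      have := Cardinal.mk_insert_le (s := ({B} : Set (Set Ordinal))) (a := A)
      simpa [Cardinal.mk_singleton, one_add_one_eq_two] using this
    calc Cardinal.mk ({A, B} : Set (Set Ordinal)) ≤ 2 := h2
      _ < Cardinal.aleph0 := Cardinal.nat_lt_aleph0 2
      _ < Cardinal.lift.{1} κ := by
          rw [← Cardinal.lift_aleph0.{1, 0}]; exact Cardinal.lift_lt.2 hκ

lemma NU.diag {κ : Cardinal.{0}} (hκ : Cardinal.aleph0 < κ) (D : NormalUltrafilterOn κ)
    (Y : Ordinal → Set Ordinal) (hY : ∀ i, Y i ∈ D.sets) :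
    {α | α < κ.ord ∧ ∀ i < α, α ∈ Y i} ∈ D.sets := by
  by_contra h
  set Δ : Set Ordinal := {α | α < κ.ord ∧ ∀ i < α, α ∈ Y i} with hΔ
  have hΔsub : Δ ⊆ Set.Iio κ.ord := fun α hα => hα.1
  have hT : Set.Iio κ.ord \ Δ ∈ D.sets := (D.ultra Δ hΔsub).resolve_left h
  classical
  set f : Ordinal → Ordinal := fun α =>
    if h : ∃ i, i < α ∧ α ∉ Y i then h.choose else 0 with hf
  have key : ∀ α ∈ Set.Iio κ.ord \ Δ, f α < α ∧ α ∉ Y (f α) := by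
    intro α hα
    have hex : ∃ i, i < α ∧ α ∉ Y i := by
      by_contra hcon
      push_neg at hcon
      exact hα.2 ⟨hα.1, fun i hi => hcon i hi⟩
    simp only [hf, dif_pos hex]
    exact hex.choose_spec
  obtain ⟨B, hB, γ, hγ⟩ := D.normal f _ hT (fun α hα => (key α hα).1)
  have h1 : (B ∩ (Set.Iio κ.ord \ Δ)) ∩ Y γ ∈ D.sets :=
    NU.inter_mem hκ D (NU.inter_mem hκ D hB hT) (hY γ)
  have h2 : (B ∩ (Set.Iio κ.ord \ Δ)) ∩ Y γ = ∅ := by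
    ext α
    simp only [Set.mem_inter_iff, Set.mem_empty_iff_false, iff_false, not_and]
    rintro ⟨hB', hT'⟩ hYγ
    have hk := (key α hT').2
    rw [hγ α hB'] at hk
    exact hk hYγ
  rw [h2] at h1
  exact D.empty_not_mem h1

theorem stmt8 (κ : Cardinal.{0}) (hκ : Cardinal.aleph0 < κ) (D : NormalUltrafilterOn κ)
    -- `Bfam` is a κ-almost disjoint family on κ:
    (Bfam : Set (Set Ordinal))
    (hBsub : ∀ C ∈ Bfam, C ⊆ Set.Iio κ.ord)
    (hBcard : ∀ C ∈ Bfam, Cardinal.mk C = Cardinal.lift.{1} κ)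
    (hBad : ∀ C ∈ Bfam, ∀ C' ∈ Bfam, C ≠ C' →
      Cardinal.mk ↥(C ∩ C') < Cardinal.lift.{1} κ)
    -- `(A i : i < κ)` is a sequence of pairwise distinct members of `Bfam`:
    (A : Ordinal → Set Ordinal) (hA : ∀ i < κ.ord, A i ∈ Bfam)
    (hAinj : ∀ i < κ.ord, ∀ j < κ.ord, i ≠ j → A i ≠ A j)
    (X : Set Ordinal) (hX : X ⊆ Set.Iio κ.ord)
    (A₀ : Set Ordinal) (hA₀ : A₀ ∈ D.sets) :
    ∃ B₀ ∈ D.sets, B₀ ⊆ A₀ ∧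
      ((∀ i α, i ∈ B₀ → α ∈ B₀ → i < α → Fseq A i α ∈ X) ∨
       (∀ i α, i ∈ B₀ → α ∈ B₀ → i < α → Fseq A i α ∉ X)) := by
  classical
  set G : Ordinal → Set Ordinal :=
    fun i => {α | α < κ.ord ∧ (i < α → Fseq A i α ∈ X)} with hG
  have hGsub : ∀ i, G i ⊆ Set.Iio κ.ord := fun i α hα => hα.1
  set Z : Set Ordinal := {i | i < κ.ord ∧ G i ∈ D.sets} with hZ
  have hZsub : Z ⊆ Set.Iio κ.ord := fun i hi => hi.1
  rcases D.ultra Z hZsub with hZD | hWD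
  · -- case: Z ∈ D; homogeneous for membership in X
    set Y : Ordinal → Set Ordinal :=
      fun i => if i ∈ Z then G i else Set.Iio κ.ord with hY
    have hYD : ∀ i, Y i ∈ D.sets := by
      intro i
      by_cases h : i ∈ Z
      · simpa [hY, h] using h.2
      · simpa [hY, h] using D.univ_mem
    have hΔ := NU.diag hκ D Y hYD
    refine ⟨A₀ ∩ (Z ∩ {α | α < κ.ord ∧ ∀ i < α, α ∈ Y i}),
      NU.inter_mem hκ D hA₀ (NU.inter_mem hκ D hZD hΔ),
      Set.inter_subset_left, Or.inl ?_⟩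
    rintro i α ⟨_, hiZ, _⟩ ⟨_, _, hαΔ⟩ hlt
    have := hαΔ.2 i hlt
    rw [hY] at this
    simp only [if_pos hiZ] at this
    exact this.2 hlt
  · -- case: complement of Z ∈ D; homogeneous for non-membership
    set Y : Ordinal → Set Ordinal :=
      fun i => if i ∈ Set.Iio κ.ord \ Z then Set.Iio κ.ord \ G i else Set.Iio κ.ord
      with hY
    have hYD : ∀ i, Y i ∈ D.sets := by
      intro i
      by_cases h : i ∈ Set.Iio κ.ord \ Z
      · have hGnot : G i ∉ D.sets := fun hc => h.2 ⟨h.1, hc⟩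
        have he : Y i = Set.Iio κ.ord \ G i := by simp only [hY]; exact if_pos h
        rw [he]; exact (D.ultra (G i) (hGsub i)).resolve_left hGnot
      · have he : Y i = Set.Iio κ.ord := by simp only [hY]; exact if_neg h
        rw [he]; exact D.univ_mem
    have hΔ := NU.diag hκ D Y hYD
    refine ⟨A₀ ∩ ((Set.Iio κ.ord \ Z) ∩ {α | α < κ.ord ∧ ∀ i < α, α ∈ Y i}),
      NU.inter_mem hκ D hA₀ (NU.inter_mem hκ D hWD hΔ),
      Set.inter_subset_left, Or.inr ?_⟩
    rintro i α ⟨_, hiW, _⟩ ⟨_, _, hαΔ⟩ hlt hmem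
    have := hαΔ.2 i hlt
    rw [hY] at this
    simp only [if_pos hiW] at this
    exact this.2 ⟨hαΔ.1, fun _ => hmem⟩
end

section
/- For every j < κ and every A ∈ D whose minimum is greater than j, the set S_A is disjoint from A_j. Consequently A_j does not belong to the ultrafilter E generated by the sets S_A for A ∈ D. -/
open Set

/-! `F(i, α)` is chosen outside `⋃ j < i, A j`, so `S_C` misses `A_j` once every element of `C`
exceeds `j`. The real content is that `F(i, α)` is an element of `A_i \ ⋃ j < i, A j` at all (for
`α` beyond the order type of that set `enumOrd` returns a junk value): the set has size `κ`
because `κ` is regular, by the `κ`-completeness of `D`, and fewer than `κ` sets `A_i ∩ A_j` of size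
`< κ` cannot cover `A_i`. If `S_{C'} ⊆ A_j` for some `C' ∈ D`, choosing `j < i < α` in `C'` gives
`F(i, α) ∈ S_{C'} \ A_j`. -/

open Cardinal Ordinal

theorem Ordinal.enumOrd_mem_of_lift_card_lt {s : Set Ordinal.{u}} {o : Ordinal.{u}}
    (h : Cardinal.lift.{u + 1} o.card < #s) : enumOrd s o ∈ s := by
  suffices hT : (s ∩ {b | ∀ c < o, enumOrd s c < b}).Nonempty by
    rw [enumOrd]
    exact (csInf_mem hT).1
  by_contra hT
  -- Otherwise every `b ∈ s` lies below some `enumOrd s c` with `c < o`; the least such `c`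
  -- is forced to satisfy `enumOrd s c = b`, so `s` would be enumerated by `Iio o`.
  have hsub : s ⊆ enumOrd s '' Iio o := by
    intro b hb
    have hex : {c | c < o ∧ b ≤ enumOrd s c}.Nonempty := by
      by_contra! hlt
      exact hT ⟨b, hb, fun c hc => not_le.1 fun hle => hlt.subset ⟨hc, hle⟩⟩
    obtain ⟨c, ⟨hco, hbc⟩, hmin⟩ := wellFounded_lt.has_min _ hex
    refine ⟨c, hco, le_antisymm (enumOrd_le_of_forall_lt hb fun d hdc => ?_) hbc⟩
    exact not_le.1 fun hle => hmin d ⟨hdc.trans hco, hle⟩ hdc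
  have hle : #s ≤ Cardinal.lift.{u + 1} o.card :=
    (mk_le_mk_of_subset hsub).trans (mk_image_le.trans (Cardinal.mk_Iio_ordinal o).le)
  exact h.not_ge hle

theorem Cardinal.le_mk_sdiff_biUnion {α ι : Type u} {c : Cardinal.{u}} (hc : c.IsRegular)
    {s : Set α} (f : ι → Set α) {t : Set ι} (hs : c ≤ #s) (ht : #t < c)
    (hst : ∀ j ∈ t, #(s ∩ f j : Set α) < c) : c ≤ #(s \ ⋃ j ∈ t, f j : Set α) := by
  have hsmall : #(s ∩ ⋃ j ∈ t, f j : Set α) < c := by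
    rw [inter_iUnion₂]
    refine (mk_biUnion_le _ t).trans_lt (mul_lt_of_lt hc.aleph0_le ht ?_)
    exact iSup_lt_of_lt_cof_ord (by rwa [hc.cof_ord]) fun j => hst j j.2
  by_contra! hlt
  have hsplit := mk_sdiff_add_mk (inter_subset_left : s ∩ ⋃ j ∈ t, f j ⊆ s)
  rw [sdiff_self_inter] at hsplit
  exact hs.not_gt (hsplit ▸ add_lt_of_lt hc.aleph0_le hlt hsmall)

section Fseq

variable {κ : Cardinal.{u}} {A : Ordinal.{u} → Set Ordinal.{u}}

theorem fseq_mem_sdiff (hκ : κ.IsRegular) {i α : Ordinal.{u}} (hi : i < κ.ord)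
    (hα : α < κ.ord) (hcard : Cardinal.lift.{u + 1} κ ≤ #(A i))
    (had : ∀ j < i, #(A i ∩ A j : Set Ordinal) < Cardinal.lift.{u + 1} κ) :
    Fseq A i α ∈ A i \ ⋃ j < i, A j := by
  refine enumOrd_mem_of_lift_card_lt ?_
  have hIio : #(Iio i) < Cardinal.lift.{u + 1} κ := by
    rwa [Cardinal.mk_Iio_ordinal, Cardinal.lift_lt, ← lt_ord]
  calc Cardinal.lift.{u + 1} α.card < Cardinal.lift.{u + 1} κ :=
        Cardinal.lift_lt.2 (lt_ord.1 hα)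
    _ ≤ _ := le_mk_sdiff_biUnion hκ.lift A hcard hIio had

theorem fseq_notMem_of_lt (hκ : κ.IsRegular)
    (hcard : ∀ i < κ.ord, Cardinal.lift.{u + 1} κ ≤ #(A i))
    (had : ∀ i < κ.ord, ∀ j < i, #(A i ∩ A j : Set Ordinal) < Cardinal.lift.{u + 1} κ)
    {i j α : Ordinal.{u}} (hji : j < i) (hi : i < κ.ord) (hα : α < κ.ord) :
    Fseq A i α ∉ A j := fun hj =>
  (fseq_mem_sdiff hκ hi hα (hcard i hi) (had i hi)).2 (mem_biUnion hji hj)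

theorem sset_inter_eq_empty (hκ : κ.IsRegular)
    (hcard : ∀ i < κ.ord, Cardinal.lift.{u + 1} κ ≤ #(A i))
    (had : ∀ i < κ.ord, ∀ j < i, #(A i ∩ A j : Set Ordinal) < Cardinal.lift.{u + 1} κ)
    {C : Set Ordinal.{u}} (hC : C ⊆ Iio κ.ord) {j : Ordinal.{u}} (hjC : ∀ i ∈ C, j < i) :
    Sset A C ∩ A j = ∅ := by
  rw [eq_empty_iff_forall_notMem]
  rintro _ ⟨⟨i, α, hi, hα, -, rfl⟩, hmem⟩
  exact fseq_notMem_of_lt hκ hcard had (hjC i hi) (hC hi) (hC hα) hmem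

end Fseq

namespace NormalUltrafilterOn

variable {κ : Cardinal.{0}}

theorem nonempty_of_mem_s10 (D : NormalUltrafilterOn κ) {X : Set Ordinal} (hX : X ∈ D.sets) :
    X.Nonempty :=
  nonempty_iff_ne_empty.2 fun h => D.empty_not_mem (h ▸ hX)

theorem biInter_mem_s10 (D : NormalUltrafilterOn κ) {ι : Type 1} {T : Set ι} (hT : T.Nonempty)
    {f : ι → Set Ordinal} (hf : ∀ i ∈ T, f i ∈ D.sets) (hcard : #T < Cardinal.lift.{1} κ) :
    ⋂ i ∈ T, f i ∈ D.sets := by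
  rw [← sInter_image]
  exact D.complete _ (image_subset_iff.2 hf) (hT.image f) (mk_image_le.trans_lt hcard)

theorem inter_mem_s10 (D : NormalUltrafilterOn κ) (hκ : ℵ₀ ≤ κ) {X Y : Set Ordinal} (hX : X ∈ D.sets)
    (hY : Y ∈ D.sets) : X ∩ Y ∈ D.sets := by
  have hcard : #({X, Y} : Set (Set Ordinal)) < Cardinal.lift.{1} κ :=
    ((finite_singleton Y).insert X).lt_aleph0.trans_le (by simpa using hκ)
  simpa using D.biInter_mem_s10 (f := id) (insert_nonempty X {Y})
    (by rintro _ (rfl | rfl) <;> assumption) hcard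

theorem Iio_diff_Iic_mem (D : NormalUltrafilterOn κ) (hκ : ℵ₀ ≤ κ) {β : Ordinal}
    (hβ : β < κ.ord) : Iio κ.ord \ Iic β ∈ D.sets := by
  have hcard : #(Iic β) < Cardinal.lift.{1} κ := by
    rw [← Order.Iio_succ, Cardinal.mk_Iio_ordinal, Cardinal.lift_lt, ← lt_ord]
    exact (isSuccLimit_ord hκ).succ_lt hβ
  convert D.biInter_mem_s10 nonempty_Iic (fun γ _ => D.nonprincipal γ) hcard using 1
  ext γ
  simp only [mem_sdiff, mem_Iio, mem_Iic, not_le, mem_iInter, mem_singleton_iff]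
  constructor
  · rintro ⟨hγ, hβγ⟩ i hi
    exact ⟨hγ, (hi.trans_lt hβγ).ne'⟩
  · intro h
    exact ⟨(h β le_rfl).1, not_le.1 fun hγβ => (h γ hγβ).2 rfl⟩

theorem exists_mem_gt (D : NormalUltrafilterOn κ) (hκ : ℵ₀ ≤ κ) {C : Set Ordinal} (hC : C ∈ D.sets)
    {β : Ordinal} (hβ : β < κ.ord) : ∃ α ∈ C, β < α := by
  obtain ⟨α, hαC, -, hβα⟩ :=
    D.nonempty_of_mem_s10 (D.inter_mem_s10 hκ hC (D.Iio_diff_Iic_mem hκ hβ))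
  exact ⟨α, hαC, not_le.1 hβα⟩

theorem exists_gt_of_mk_lt (D : NormalUltrafilterOn κ) (hκ : ℵ₀ ≤ κ) {T : Set Ordinal}
    (hT : T ⊆ Iio κ.ord) (hcard : #T < Cardinal.lift.{1} κ) : ∃ γ < κ.ord, ∀ β ∈ T, β < γ := by
  rcases T.eq_empty_or_nonempty with rfl | hne
  · obtain ⟨γ, hγ⟩ := D.nonempty_of_mem_s10 D.univ_mem
    exact ⟨γ, hγ, by simp⟩
  · obtain ⟨γ, hγ⟩ := D.nonempty_of_mem_s10
      (D.biInter_mem_s10 hne (fun β hβ => D.Iio_diff_Iic_mem hκ (hT hβ)) hcard)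
    simp only [mem_iInter, mem_sdiff, mem_Iio, mem_Iic, not_le] at hγ
    obtain ⟨β, hβ⟩ := hne
    exact ⟨γ, (hγ β hβ).1, fun β' hβ' => (hγ β' hβ').2⟩

-- A cofinal subset of `κ` of size `< κ` would be bounded below `κ` by `exists_gt_of_mk_lt`.
theorem isRegular (D : NormalUltrafilterOn κ) (hκ : ℵ₀ ≤ κ) : κ.IsRegular := by
  refine ⟨hκ, ?_⟩
  rw [← Cardinal.lift_le.{1}, lift_cof, ← cof_Iio, Order.le_cof_iff]
  intro s hs
  by_contra! hlt
  obtain ⟨γ, hγ, hgt⟩ := D.exists_gt_of_mk_lt hκ (T := Subtype.val '' s)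
    (by rintro _ ⟨x, -, rfl⟩; exact x.2) (mk_image_le.trans_lt hlt)
  obtain ⟨b, hb, hγb⟩ := hs ⟨γ, hγ⟩
  exact (hgt b ⟨b, hb, rfl⟩).not_ge hγb

end NormalUltrafilterOn

theorem stmt10_general (κ : Cardinal.{0}) (hκ : Cardinal.aleph0 < κ) (D : NormalUltrafilterOn κ)
    -- `Bfam` is a κ-almost disjoint family on κ:
    (Bfam : Set (Set Ordinal))
    (hBcard : ∀ C ∈ Bfam, Cardinal.mk C = Cardinal.lift.{1} κ)
    (hBad : ∀ C ∈ Bfam, ∀ C' ∈ Bfam, C ≠ C' →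
      Cardinal.mk ↥(C ∩ C') < Cardinal.lift.{1} κ)
    -- `(A i : i < κ)` is a sequence of pairwise distinct members of `Bfam`:
    (A : Ordinal → Set Ordinal) (hA : ∀ i < κ.ord, A i ∈ Bfam)
    (hAinj : ∀ i < κ.ord, ∀ j < κ.ord, i ≠ j → A i ≠ A j)
    (j : Ordinal) (hj : j < κ.ord)
    (C : Set Ordinal) (hC : C ∈ D.sets) (hmin : j < sInf C) :
    Sset A C ∩ A j = ∅ ∧ A j ∉ Eset κ D A := by
  have hreg := D.isRegular hκ.le
  have hcard : ∀ i < κ.ord, Cardinal.lift.{1} κ ≤ #(A i) := fun i hi => (hBcard _ (hA i hi)).ge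
  have had : ∀ i < κ.ord, ∀ j < i, #(A i ∩ A j : Set Ordinal) < Cardinal.lift.{1} κ :=
    fun i hi j hji => hBad _ (hA i hi) _ (hA j (hji.trans hi))
      (hAinj i hi j (hji.trans hi) hji.ne')
  refine ⟨sset_inter_eq_empty hreg hcard had (D.mem_subset C hC)
    fun i hi => hmin.trans_le (csInf_le' hi), ?_⟩
  rintro ⟨-, C', hC', hS⟩
  obtain ⟨i, hiC, hji⟩ := D.exists_mem_gt hκ.le hC' hj
  have hi := D.mem_subset C' hC' hiC
  obtain ⟨α, hαC, hiα⟩ := D.exists_mem_gt hκ.le hC' hi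
  exact fseq_notMem_of_lt hreg hcard had hji hi (D.mem_subset C' hC' hαC)
    (hS ⟨i, α, hiC, hαC, hiα, rfl⟩)

theorem stmt10 (κ : Cardinal.{0}) (hκ : Cardinal.aleph0 < κ) (D : NormalUltrafilterOn κ)
    -- `Bfam` is a κ-almost disjoint family on κ:
    (Bfam : Set (Set Ordinal))
    (hBsub : ∀ C ∈ Bfam, C ⊆ Set.Iio κ.ord)
    (hBcard : ∀ C ∈ Bfam, Cardinal.mk C = Cardinal.lift.{1} κ)
    (hBad : ∀ C ∈ Bfam, ∀ C' ∈ Bfam, C ≠ C' →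
      Cardinal.mk ↥(C ∩ C') < Cardinal.lift.{1} κ)
    -- `(A i : i < κ)` is a sequence of pairwise distinct members of `Bfam`:
    (A : Ordinal → Set Ordinal) (hA : ∀ i < κ.ord, A i ∈ Bfam)
    (hAinj : ∀ i < κ.ord, ∀ j < κ.ord, i ≠ j → A i ≠ A j)
    (j : Ordinal) (hj : j < κ.ord)
    (C : Set Ordinal) (hC : C ∈ D.sets) (hmin : j < sInf C) :
    Sset A C ∩ A j = ∅ ∧ A j ∉ Eset κ D A :=
  stmt10_general κ hκ D Bfam hBcard hBad A hA hAinj j hj C hC hmin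
end

section
/- Let i* < κ and let C ⊆ κ be a set such that |C ∩ A_i| < κ for every i with i* ≤ i < κ. Then there exists a club H ⊆ κ (namely the set of limit ordinals δ closed under the function f(i) = sup(A_i ∩ C) + i + 1) such that F(i,α) ∉ C whenever i* ≤ i < α and i, α ∈ H. -/
open Set

/-!
The set `A i \ ⋃_{j<i} A j` misses fewer than `κ` points of `A i` (a union of fewer than `κ`
small sets, by regularity), so it is cofinal in `κ` and its enumeration `α ↦ F(i, α)` is strictly
increasing on `κ`; hence `F(i, α) ∈ A i` and `α ≤ F(i, α)`. If also `F(i, α) ∈ C`, then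
`F(i, α) ≤ sup (A i ∩ C) < α` because `α` is closed under `f`, a contradiction.

Closure points of `f` are closed under suprema directly; above any `β < κ` one is obtained as the
supremum of the iterates from `β` of `x ↦ sup {f i | i < x} + 1`, which stays below `κ` because
`cof κ = κ > ω`.
-/

open Cardinal Order

universe u

theorem Cardinal.le_mk_sdiff_of_lt {α : Type*} {c : Cardinal} (hc : ℵ₀ ≤ c) {S T : Set α}
    (hS : c ≤ #S) (hT : #T < c) : c ≤ #(S \ T : Set α) := by
  by_contra! h
  exact (hS.trans (le_mk_sdiff_add_mk S T)).not_gt (add_lt_of_lt hc h hT)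

namespace Ordinal

variable {κ : Cardinal.{u}}

theorem mk_Iio_lt_of_lt_ord {o : Ordinal.{u}} (ho : o < κ.ord) :
    #(Iio o) < Cardinal.lift.{u + 1} κ := by
  rw [Cardinal.mk_Iio_ordinal, Cardinal.lift_lt]
  exact lt_ord.1 ho

theorem sSup_lt_ord_of_isRegular (hκ : κ.IsRegular) {s : Set Ordinal.{u}}
    (hs : #s < Cardinal.lift.{u + 1} κ) (hsκ : s ⊆ Iio κ.ord) : sSup s < κ.ord :=
  sSup_lt_of_lt_cof (by rwa [← lift_cof, hκ.cof_ord]) hsκ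

theorem exists_mem_gt_of_lift_le_mk (hκ : ℵ₀ ≤ κ) {s : Set Ordinal.{u}}
    (hs : Cardinal.lift.{u + 1} κ ≤ #s) {β : Ordinal.{u}} (hβ : β < κ.ord) :
    ∃ b ∈ s, β < b := by
  by_contra! h
  have hsub : s ⊆ Iio (succ β) := fun b hb ↦ lt_succ_iff.2 (h b hb)
  exact (hs.trans (mk_le_mk_of_subset hsub)).not_gt
    (mk_Iio_lt_of_lt_ord ((isSuccLimit_ord hκ).succ_lt hβ))

theorem enumOrd_mem_of_exists {s : Set Ordinal} {o : Ordinal}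
    (h : ∃ b ∈ s, ∀ c < o, enumOrd s c < b) :
    enumOrd s o ∈ s ∧ ∀ c < o, enumOrd s c < enumOrd s o := by
  rw [enumOrd]
  exact csInf_mem h

theorem enumOrd_mem_of_lt_ord (hκ : κ.IsRegular) {s : Set Ordinal.{u}} (hsκ : s ⊆ Iio κ.ord)
    (hs : ∀ β < κ.ord, ∃ b ∈ s, β < b) {o : Ordinal.{u}} (ho : o < κ.ord) :
    enumOrd s o ∈ s ∧ ∀ c < o, enumOrd s c < enumOrd s o := by
  induction o using WellFoundedLT.induction with
  | _ o IH =>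
  have hbelow : enumOrd s '' Iio o ⊆ Iio κ.ord := by
    rintro _ ⟨c, hc, rfl⟩
    exact hsκ (IH c hc (hc.trans ho)).1
  obtain ⟨b, hb, hlt⟩ :=
    hs _ (sSup_lt_ord_of_isRegular hκ (mk_image_le.trans_lt (mk_Iio_lt_of_lt_ord ho)) hbelow)
  have hbdd : BddAbove (enumOrd s '' Iio o) := ⟨κ.ord, fun _ hx ↦ (hbelow hx).le⟩
  exact enumOrd_mem_of_exists
    ⟨b, hb, fun c hc ↦ (le_csSup hbdd (mem_image_of_mem _ hc)).trans_lt hlt⟩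

theorem le_enumOrd_self_of_lt_ord (hκ : κ.IsRegular) {s : Set Ordinal.{u}} (hsκ : s ⊆ Iio κ.ord)
    (hs : ∀ β < κ.ord, ∃ b ∈ s, β < b) {o : Ordinal.{u}} (ho : o < κ.ord) :
    o ≤ enumOrd s o := by
  induction o using WellFoundedLT.induction with
  | _ o IH =>
  by_contra! h
  exact (IH _ h (h.trans ho)).not_gt ((enumOrd_mem_of_lt_ord hκ hsκ hs ho).2 _ h)

theorem mk_inter_biUnion_lt (hκ : κ.IsRegular) {A : Ordinal.{u} → Set Ordinal.{u}}
    {i : Ordinal.{u}} (hi : i < κ.ord)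
    (hA : ∀ j < i, #(A i ∩ A j : Set Ordinal) < Cardinal.lift.{u + 1} κ) :
    #(A i ∩ ⋃ j < i, A j : Set Ordinal) < Cardinal.lift.{u + 1} κ := by
  rw [inter_iUnion₂]
  exact (card_biUnion_lt_iff_forall_of_isRegular (s := Iio i) hκ.lift
    (mk_Iio_lt_of_lt_ord hi)).2 hA

end Ordinal

open Ordinal

section AlmostDisjoint

variable {κ : Cardinal.{u}} {A : Ordinal.{u} → Set Ordinal.{u}} {i : Ordinal.{u}}

theorem exists_mem_sdiff_biUnion_gt (hκ : κ.IsRegular)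
    (hAcard : Cardinal.lift.{u + 1} κ ≤ #(A i))
    (hAad : ∀ j < i, #(A i ∩ A j : Set Ordinal) < Cardinal.lift.{u + 1} κ) (hi : i < κ.ord)
    {β : Ordinal.{u}} (hβ : β < κ.ord) : ∃ b ∈ A i \ ⋃ j < i, A j, β < b := by
  refine exists_mem_gt_of_lift_le_mk hκ.aleph0_le ?_ hβ
  rw [← sdiff_self_inter]
  exact le_mk_sdiff_of_lt hκ.lift.aleph0_le hAcard (mk_inter_biUnion_lt hκ hi hAad)

theorem Fseq_mem (hκ : κ.IsRegular) (hAκ : A i ⊆ Iio κ.ord)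
    (hAcard : Cardinal.lift.{u + 1} κ ≤ #(A i))
    (hAad : ∀ j < i, #(A i ∩ A j : Set Ordinal) < Cardinal.lift.{u + 1} κ) (hi : i < κ.ord)
    {α : Ordinal.{u}} (hα : α < κ.ord) : Fseq A i α ∈ A i :=
  (enumOrd_mem_of_lt_ord hκ (sdiff_subset.trans hAκ)
    (fun _ ↦ exists_mem_sdiff_biUnion_gt hκ hAcard hAad hi) hα).1.1

theorem le_Fseq (hκ : κ.IsRegular) (hAκ : A i ⊆ Iio κ.ord)
    (hAcard : Cardinal.lift.{u + 1} κ ≤ #(A i))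
    (hAad : ∀ j < i, #(A i ∩ A j : Set Ordinal) < Cardinal.lift.{u + 1} κ) (hi : i < κ.ord)
    {α : Ordinal.{u}} (hα : α < κ.ord) : α ≤ Fseq A i α :=
  le_enumOrd_self_of_lt_ord hκ (sdiff_subset.trans hAκ)
    (fun _ ↦ exists_mem_sdiff_biUnion_gt hκ hAcard hAad hi) hα

end AlmostDisjoint

def limitClosurePoints (c : Ordinal.{u}) (P : Ordinal.{u} → Prop) (f : Ordinal.{u} → Ordinal.{u}) :
    Set Ordinal.{u} :=
  {δ | δ < c ∧ IsSuccLimit δ ∧ ∀ i, P i → i < δ → f i < δ}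

section LimitClosurePoints

variable {c : Ordinal.{u}} {P : Ordinal.{u} → Prop} {f : Ordinal.{u} → Ordinal.{u}}

theorem sSup_mem_limitClosurePoints {X : Set Ordinal.{u}} (hX : X ⊆ limitClosurePoints c P f)
    (hne : X.Nonempty) (hXc : sSup X < c) : sSup X ∈ limitClosurePoints c P f := by
  have hbdd : BddAbove X := ⟨c, fun x hx ↦ (hX hx).1.le⟩
  have hsup : ∀ a < sSup X, ∃ x ∈ limitClosurePoints c P f, a < x ∧ x ≤ sSup X := fun a ha ↦
    let ⟨x, hx, hax⟩ := exists_lt_of_lt_csSup hne ha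
    ⟨x, hX hx, hax, le_csSup hbdd hx⟩
  obtain ⟨x₀, hx₀⟩ := hne
  refine ⟨hXc, isSuccLimit_iff.2 ⟨?_, isSuccPrelimit_of_succ_lt fun a ha ↦ ?_⟩, fun i hP hi ↦ ?_⟩
  · exact ((hX hx₀).2.1.bot_lt.trans_le (le_csSup hbdd hx₀)).ne'
  · obtain ⟨x, hx, hax, hxX⟩ := hsup a ha
    exact (hx.2.1.succ_lt hax).trans_le hxX
  · obtain ⟨x, hx, hix, hxX⟩ := hsup i hi
    exact (hx.2.2 i hP hix).trans_le hxX

variable {κ : Cardinal.{u}}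

theorem exists_mem_limitClosurePoints_gt (hκ : κ.IsRegular) (hκ₀ : ℵ₀ < κ)
    (hf : ∀ i < κ.ord, P i → f i < κ.ord) {β : Ordinal.{u}} (hβ : β < κ.ord) :
    ∃ δ ∈ limitClosurePoints κ.ord P f, β < δ := by
  set b : Ordinal.{u} → Ordinal.{u} := fun x ↦ sSup (f '' {i | P i ∧ i < x})
  set g : Ordinal.{u} → Ordinal.{u} := fun x ↦ succ (max x (b x))
  have hb_lt : ∀ x < κ.ord, b x < κ.ord := fun x hx ↦ sSup_lt_ord_of_isRegular hκ
    (mk_image_le.trans_lt ((mk_le_mk_of_subset fun _ hi ↦ hi.2).trans_lt (mk_Iio_lt_of_lt_ord hx)))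
    (by rintro _ ⟨i, ⟨hP, hi⟩, rfl⟩; exact hf i (hi.trans hx) hP)
  have hg_lt : ∀ x < κ.ord, g x < κ.ord := fun x hx ↦
    (isSuccLimit_ord hκ.aleph0_le).succ_lt (max_lt hx (hb_lt x hx))
  have hlt_g : ∀ x, x < g x := fun x ↦ (le_max_left _ _).trans_lt (lt_succ _)
  have hb_lt_g : ∀ x, b x < g x := fun x ↦ (le_max_right _ _).trans_lt (lt_succ _)
  have hstep : ∀ a < nfp g β, ∃ x, a < x ∧ g x ≤ nfp g β := fun a ha ↦ by
    obtain ⟨n, hn⟩ := lt_nfp_iff.1 ha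
    refine ⟨_, hn, ?_⟩
    simpa only [Function.iterate_succ_apply'] using iterate_le_nfp g β (n + 1)
  have hβδ : β < nfp g β := (hlt_g β).trans_le (iterate_le_nfp g β 1)
  refine ⟨nfp g β, ⟨nfp_lt_ord (by rwa [hκ.cof_ord]) hg_lt hβ, isSuccLimit_iff.2
    ⟨(hβδ.trans_le' bot_le).ne', isSuccPrelimit_of_succ_lt fun a ha ↦ ?_⟩, fun i hP hi ↦ ?_⟩, hβδ⟩
  · obtain ⟨x, hax, hgx⟩ := hstep a ha
    exact ((succ_le_of_lt hax).trans_lt (hlt_g x)).trans_le hgx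
  · obtain ⟨x, hix, hgx⟩ := hstep i hi
    calc f i ≤ b x :=
          le_csSup (bddAbove_image ⟨x, fun _ hj ↦ hj.2.le⟩ f) (mem_image_of_mem f ⟨hP, hix⟩)
      _ < g x := hb_lt_g x
      _ ≤ nfp g β := hgx

end LimitClosurePoints

theorem stmt11_general (κ : Cardinal.{0}) (hreg : κ.IsRegular) (hκ : Cardinal.aleph0 < κ)
    -- `Bfam` is a κ-almost disjoint family on κ:
    (Bfam : Set (Set Ordinal))
    (hBsub : ∀ C ∈ Bfam, C ⊆ Set.Iio κ.ord)
    (hBcard : ∀ C ∈ Bfam, Cardinal.mk C = Cardinal.lift.{1} κ)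
    (hBad : ∀ C ∈ Bfam, ∀ C' ∈ Bfam, C ≠ C' →
      Cardinal.mk ↥(C ∩ C') < Cardinal.lift.{1} κ)
    -- `(A i : i < κ)` is a sequence of pairwise distinct members of `Bfam`:
    (A : Ordinal → Set Ordinal) (hA : ∀ i < κ.ord, A i ∈ Bfam)
    (hAinj : ∀ i < κ.ord, ∀ j < κ.ord, i ≠ j → A i ≠ A j)
    (istar : Ordinal)
    (C : Set Ordinal)
    (hC : ∀ i, istar ≤ i → i < κ.ord → Cardinal.mk ↥(C ∩ A i) < Cardinal.lift.{1} κ) :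
    -- the set `H` of limit ordinals `δ < κ` closed under `f(i) = sup(A_i ∩ C) + i + 1`
    -- (for `i*` ≤ `i`) is a club of `κ`, and `F(i,α) ∉ C` whenever `i* ≤ i < α`
    -- and `i, α ∈ H`:
    ∃ H : Set Ordinal,
      H = {δ | δ < κ.ord ∧ Order.IsSuccLimit δ ∧
            ∀ i, istar ≤ i → i < δ → sSup (A i ∩ C) + i + 1 < δ} ∧
      (∀ β < κ.ord, ∃ δ ∈ H, β < δ) ∧
      (∀ X ⊆ H, X.Nonempty → sSup X < κ.ord → sSup X ∈ H) ∧
      (∀ i α, istar ≤ i → i < α → i ∈ H → α ∈ H → Fseq A i α ∉ C) := by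
  have hsSup_lt : ∀ i < κ.ord, istar ≤ i → sSup (A i ∩ C) < κ.ord := fun i hi hstar ↦
    sSup_lt_ord_of_isRegular hreg (inter_comm C (A i) ▸ hC i hstar hi)
      (inter_subset_left.trans (hBsub _ (hA i hi)))
  refine ⟨limitClosurePoints κ.ord (istar ≤ ·) (fun i ↦ sSup (A i ∩ C) + i + 1), rfl,
    fun β hβ ↦ exists_mem_limitClosurePoints_gt hreg hκ (fun i hi hstar ↦ ?_) hβ,
    fun X hX hne hXκ ↦ sSup_mem_limitClosurePoints hX hne hXκ, ?_⟩
  · exact (isSuccLimit_ord hreg.aleph0_le).succ_lt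
      (isPrincipal_add_ord hreg.aleph0_le (hsSup_lt i hi hstar) hi)
  rintro i α hstar hiα ⟨hi, -⟩ ⟨hα, -, hαclosed⟩ hFC
  have hAad : ∀ j < i, #(A i ∩ A j : Set Ordinal) < Cardinal.lift.{1} κ := fun j hj ↦
    hBad _ (hA i hi) _ (hA j (hj.trans hi)) (hAinj i hi j (hj.trans hi) hj.ne')
  have hAκ := hBsub _ (hA i hi)
  have hAcard := (hBcard _ (hA i hi)).ge
  have hF_le : Fseq A i α ≤ sSup (A i ∩ C) :=
    le_csSup ⟨κ.ord, fun _ hx ↦ (hAκ hx.1).le⟩ ⟨Fseq_mem hreg hAκ hAcard hAad hi hα, hFC⟩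
  have : sSup (A i ∩ C) < α := (le_self_add.trans le_self_add).trans_lt (hαclosed i hstar hiα)
  exact (le_Fseq hreg hAκ hAcard hAad hi hα).not_gt (hF_le.trans_lt this)

theorem stmt11 (κ : Cardinal.{0}) (hreg : κ.IsRegular) (hκ : Cardinal.aleph0 < κ)
    -- `Bfam` is a κ-almost disjoint family on κ:
    (Bfam : Set (Set Ordinal))
    (hBsub : ∀ C ∈ Bfam, C ⊆ Set.Iio κ.ord)
    (hBcard : ∀ C ∈ Bfam, Cardinal.mk C = Cardinal.lift.{1} κ)
    (hBad : ∀ C ∈ Bfam, ∀ C' ∈ Bfam, C ≠ C' →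
      Cardinal.mk ↥(C ∩ C') < Cardinal.lift.{1} κ)
    -- `(A i : i < κ)` is a sequence of pairwise distinct members of `Bfam`:
    (A : Ordinal → Set Ordinal) (hA : ∀ i < κ.ord, A i ∈ Bfam)
    (hAinj : ∀ i < κ.ord, ∀ j < κ.ord, i ≠ j → A i ≠ A j)
    (istar : Ordinal) (histar : istar < κ.ord)
    (C : Set Ordinal) (hCsub : C ⊆ Set.Iio κ.ord)
    (hC : ∀ i, istar ≤ i → i < κ.ord → Cardinal.mk ↥(C ∩ A i) < Cardinal.lift.{1} κ) :
    -- the set `H` of limit ordinals `δ < κ` closed under `f(i) = sup(A_i ∩ C) + i + 1`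
    -- (for `i*` ≤ `i`) is a club of `κ`, and `F(i,α) ∉ C` whenever `i* ≤ i < α`
    -- and `i, α ∈ H`:
    ∃ H : Set Ordinal,
      H = {δ | δ < κ.ord ∧ Order.IsSuccLimit δ ∧
            ∀ i, istar ≤ i → i < δ → sSup (A i ∩ C) + i + 1 < δ} ∧
      (∀ β < κ.ord, ∃ δ ∈ H, β < δ) ∧
      (∀ X ⊆ H, X.Nonempty → sSup X < κ.ord → sSup X ∈ H) ∧
      (∀ i α, istar ≤ i → i < α → i ∈ H → α ∈ H → Fseq A i α ∉ C) :=
  stmt11_general κ hreg hκ Bfam hBsub hBcard hBad A hA hAinj istar C hC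
end

section
/- For every C ∈ B there exists A ∈ D such that S_A ∩ C = ∅. Consequently, no member of B belongs to the ultrafilter E := {Y ⊆ κ : there exists A ∈ D such that S_A ⊆ Y}, i.e., E ∩ B = ∅. -/
open Set

namespace Stmt12Aux

open Cardinal Ordinal

variable {κ : Cardinal.{0}} {D : NormalUltrafilterOn κ}

theorem aleph0_lt_lift' (hκ : ℵ₀ < κ) : (ℵ₀ : Cardinal.{1}) < Cardinal.lift.{1} κ := by
  simpa using Cardinal.lift_lt.{0,1}.2 hκ

theorem inter_mem (D : NormalUltrafilterOn κ) (hκ : ℵ₀ < κ) {X Y : Set Ordinal} (hX : X ∈ D.sets) (hY : Y ∈ D.sets) :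
    X ∩ Y ∈ D.sets := by
  have h := D.complete {X, Y} (by rintro Z (rfl | rfl) <;> assumption) ⟨X, by simp⟩
    (lt_of_lt_of_le (Set.toFinite ({X, Y} : Set (Set Ordinal))).lt_aleph0
      (aleph0_lt_lift' hκ).le)
  rwa [Set.sInter_pair] at h

theorem not_small_mem (D : NormalUltrafilterOn κ) (hκ : ℵ₀ < κ) {s : Set Ordinal} (hs : s ∈ D.sets) :
    ¬ (#s < Cardinal.lift.{1} κ) := by
  intro hsmall
  rcases s.eq_empty_or_nonempty with rfl | hne
  · exact D.empty_not_mem hs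
  · set S : Set (Set Ordinal) := (fun x => Set.Iio κ.ord \ {x}) '' s with hS
    have hmem : ⋂₀ S ∈ D.sets := D.complete S (by rintro _ ⟨x, hx, rfl⟩; exact D.nonprincipal x)
      (hne.image _) (lt_of_le_of_lt Cardinal.mk_image_le hsmall)
    have hmem2 : (⋂₀ S) ∩ s ∈ D.sets := inter_mem D hκ hmem hs
    have hempty : (⋂₀ S) ∩ s = ∅ := by
      ext y
      simp only [Set.mem_empty_iff_false, iff_false, Set.mem_inter_iff, not_and]
      intro h1 h2
      exact (Set.mem_sInter.1 h1 _ ⟨y, h2, rfl⟩).2 rfl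
    rw [hempty] at hmem2
    exact D.empty_not_mem hmem2

theorem mem_card_ge (D : NormalUltrafilterOn κ) (hκ : ℵ₀ < κ) {s : Set Ordinal} (hs : s ∈ D.sets) :
    Cardinal.lift.{1} κ ≤ #s := not_lt.1 (not_small_mem D hκ hs)

theorem compl_small_mem (D : NormalUltrafilterOn κ) (hκ : ℵ₀ < κ) {s : Set Ordinal} (hsub : s ⊆ Set.Iio κ.ord)
    (hsm : #s < Cardinal.lift.{1} κ) : Set.Iio κ.ord \ s ∈ D.sets :=
  (D.ultra s hsub).resolve_left fun h => not_small_mem D hκ h hsm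

theorem mk_Iic_lt (hκ : ℵ₀ < κ) {a : Ordinal} (ha : a < κ.ord) :
    #(Set.Iic a) < Cardinal.lift.{1} κ := by
  rw [← Order.Iio_succ, Ordinal.mk_Iio_ordinal, Cardinal.lift_lt, ← Ordinal.add_one_eq_succ,
    Ordinal.card_add, Ordinal.card_one]
  exact Cardinal.add_lt_of_lt hκ.le (Cardinal.lt_ord.1 ha)
    (lt_of_lt_of_le Cardinal.one_lt_aleph0 hκ.le)

theorem kappa_regular (D : NormalUltrafilterOn κ) (hκ : ℵ₀ < κ) : κ.IsRegular := by
  refine ⟨hκ.le, ?_⟩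
  by_contra hlt
  push_neg at hlt
  obtain ⟨ι, f, hlsub, hcard⟩ := Ordinal.exists_lsub_cof κ.ord
  have hκ0 : (0 : Ordinal) < κ.ord := Cardinal.lt_ord.2 (by simpa using hκ.trans_le' aleph0_pos.le)
  have hι : Nonempty ι := by
    by_contra h
    rw [not_nonempty_iff] at h
    rw [(Ordinal.lsub_eq_zero_iff f).2 h] at hlsub
    exact hκ0.ne' hlsub.symm
  set g : ι → Set Ordinal := fun j => Set.Iio κ.ord \ (Set.Iic (f j) ∩ Set.Iio κ.ord) with hg
  have hfj : ∀ j, f j < κ.ord := fun j => hlsub ▸ Ordinal.lt_lsub f j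
  have hgmem : ∀ j, g j ∈ D.sets := fun j =>
    compl_small_mem D hκ inter_subset_right
      (lt_of_le_of_lt (Cardinal.mk_le_mk_of_subset inter_subset_left) (mk_Iic_lt hκ (hfj j)))
  have hmem : ⋂₀ (Set.range g) ∈ D.sets := by
    refine D.complete _ (by rintro _ ⟨j, rfl⟩; exact hgmem j) (Set.range_nonempty g) ?_
    have hr : #(Set.range g) ≤ Cardinal.lift.{1} #ι := by
      simpa using Cardinal.mk_range_le_lift (f := g)
    refine lt_of_le_of_lt hr ?_
    rw [hcard, Cardinal.lift_lt]
    exact hlt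
  have hempty : ⋂₀ (Set.range g) = ∅ := by
    ext y
    simp only [Set.mem_empty_iff_false, iff_false]
    intro hy
    have hyκ : y < κ.ord := (Set.mem_sInter.1 hy _ ⟨Classical.arbitrary ι, rfl⟩).1
    have : ∀ j, f j < y := by
      intro j
      have h2 := Set.mem_sInter.1 hy _ ⟨j, rfl⟩
      by_contra hle
      exact h2.2 ⟨not_lt.1 hle, hyκ⟩
    exact absurd (hlsub ▸ Ordinal.lsub_le this) (not_le.2 hyκ)
  rw [hempty] at hmem
  exact D.empty_not_mem hmem

theorem lift_isRegular (h : κ.IsRegular) : (Cardinal.lift.{1} κ).IsRegular := by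
  constructor
  · exact Cardinal.aleph0_le_lift.2 h.1
  · rw [← Cardinal.lift_ord, ← Ordinal.lift_cof]
    exact Cardinal.lift_le.2 h.2

theorem exists_mem_diff {s u : Set Ordinal} (hs : Cardinal.lift.{1} κ ≤ #s)
    (hu : #u < Cardinal.lift.{1} κ) : (s \ u).Nonempty := by
  rw [Set.nonempty_iff_ne_empty]
  intro h
  rw [Set.diff_eq_empty] at h
  exact absurd (hs.trans (Cardinal.mk_le_mk_of_subset h)) (not_le.2 hu)

theorem exists_bound (hκ : ℵ₀ < κ) (hreg : (Cardinal.lift.{1} κ).IsRegular)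
    {t : Set Ordinal} (ht : t ⊆ Set.Iio κ.ord) (hsm : #t < Cardinal.lift.{1} κ) :
    ∃ β < κ.ord, ∀ x ∈ t, x < β := by
  set u : Set Ordinal := ⋃ x : t, Set.Iic (x : Ordinal) with hu
  have husm : #u < Cardinal.lift.{1} κ := by
    rw [Cardinal.card_iUnion_lt_iff_forall_of_isRegular hreg hsm]
    exact fun x => mk_Iic_lt hκ (ht x.2)
  have hIio : Cardinal.lift.{1} κ ≤ #(Set.Iio κ.ord) := by
    rw [Ordinal.mk_Iio_ordinal, Cardinal.card_ord]
  obtain ⟨β, hβ1, hβ2⟩ := exists_mem_diff hIio husm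
  refine ⟨β, hβ1, fun x hx => ?_⟩
  by_contra hbx
  exact hβ2 (Set.mem_iUnion.2 ⟨⟨x, hx⟩, not_lt.1 hbx⟩)

theorem enum_spec (hκ : ℵ₀ < κ) (hreg : (Cardinal.lift.{1} κ).IsRegular)
    {s : Set Ordinal} (hsub : s ⊆ Set.Iio κ.ord) (hbig : Cardinal.lift.{1} κ ≤ #s) :
    ∀ o < κ.ord, Ordinal.enumOrd s o ∈ s ∧
      ∀ c < o, Ordinal.enumOrd s c < Ordinal.enumOrd s o := by
  intro o
  induction o using Ordinal.induction with
  | _ o IH =>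
    intro ho
    have hne : (s ∩ { b | ∀ c, c < o → Ordinal.enumOrd s c < b }).Nonempty := by
      set u : Set Ordinal := ⋃ c : (Set.Iio o), Set.Iic (Ordinal.enumOrd s c) with hu
      have husm : #u < Cardinal.lift.{1} κ := by
        have hidx : #(Set.Iio o) < Cardinal.lift.{1} κ := by
          rw [Ordinal.mk_Iio_ordinal, Cardinal.lift_lt]
          exact Cardinal.lt_ord.1 ho
        rw [Cardinal.card_iUnion_lt_iff_forall_of_isRegular hreg hidx]
        rintro ⟨c, hc⟩
        exact mk_Iic_lt hκ (hsub ((IH c hc (hc.trans ho)).1))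
      obtain ⟨b, hbs, hbu⟩ := exists_mem_diff hbig husm
      refine ⟨b, hbs, fun c hc => ?_⟩
      by_contra hbc
      exact hbu (Set.mem_iUnion.2 ⟨⟨c, hc⟩, not_lt.1 hbc⟩)
    have h2 : Ordinal.enumOrd s o ∈ s ∩ { b | ∀ c, c < o → Ordinal.enumOrd s c < b } := by
      rw [Ordinal.enumOrd]
      exact csInf_mem hne
    exact ⟨h2.1, fun c hc => h2.2 c hc⟩

theorem club_mem (D : NormalUltrafilterOn κ) (hκ : ℵ₀ < κ) (h : Ordinal → Ordinal)
    (hh : ∀ i < κ.ord, h i < κ.ord) :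
    {α | α < κ.ord ∧ ∀ i < α, h i ≤ α} ∈ D.sets := by
  classical
  by_contra hCl
  set Cl : Set Ordinal := {α | α < κ.ord ∧ ∀ i < α, h i ≤ α} with hCldef
  have hClsub : Cl ⊆ Set.Iio κ.ord := fun α hα => hα.1
  have hX : Set.Iio κ.ord \ Cl ∈ D.sets := (D.ultra Cl hClsub).resolve_left hCl
  have hex : ∀ α ∈ Set.Iio κ.ord \ Cl, ∃ i, i < α ∧ α < h i := by
    rintro α ⟨hακ, hαCl⟩
    by_contra hno
    push_neg at hno
    exact hαCl ⟨hακ, fun i hi => hno i hi⟩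
  set f : Ordinal → Ordinal := fun α =>
    if hα : ∃ i, i < α ∧ α < h i then Classical.choose hα else 0 with hf
  have hregr : ∀ α ∈ Set.Iio κ.ord \ Cl, f α < α := by
    intro α hα
    have he := hex α hα
    rw [hf]
    simp only [dif_pos he]
    exact (Classical.choose_spec he).1
  obtain ⟨B, hB, γ, hγ⟩ := D.normal f _ hX hregr
  have hB' : B ∩ (Set.Iio κ.ord \ Cl) ∈ D.sets := inter_mem D hκ hB hX
  have hBsub2 : B ∩ (Set.Iio κ.ord \ Cl) ⊆ Set.Iio (h γ) ∩ Set.Ioi γ := by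
    rintro α ⟨hαB, hαX⟩
    have he := hex α hαX
    have hfα : f α = Classical.choose he := by rw [hf]; simp only [dif_pos he]
    have hspec := Classical.choose_spec he
    have : γ = Classical.choose he := by rw [← hγ α hαB, hfα]
    exact ⟨this ▸ hspec.2, this ▸ hspec.1⟩
  obtain ⟨α₀, hα₀⟩ := Set.nonempty_iff_ne_empty.2
    (fun hemp => D.empty_not_mem (hemp ▸ hB'))
  have hγκ : γ < κ.ord := lt_trans (hBsub2 hα₀).2 (hα₀.2.1)
  have hsmall : #(B ∩ (Set.Iio κ.ord \ Cl) : Set Ordinal) < Cardinal.lift.{1} κ := by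
    refine lt_of_le_of_lt (Cardinal.mk_le_mk_of_subset
      (fun x hx => (hBsub2 hx).1)) ?_
    rw [Ordinal.mk_Iio_ordinal, Cardinal.lift_lt]
    exact Cardinal.lt_ord.1 (hh γ hγκ)
  exact not_small_mem D hκ hB' hsmall

theorem Tset_big (hκ : ℵ₀ < κ) (hreg : (Cardinal.lift.{1} κ).IsRegular)
    {Bfam : Set (Set Ordinal)}
    (hBsub : ∀ C ∈ Bfam, C ⊆ Set.Iio κ.ord)
    (hBcard : ∀ C ∈ Bfam, Cardinal.mk C = Cardinal.lift.{1} κ)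
    (hBad : ∀ C ∈ Bfam, ∀ C' ∈ Bfam, C ≠ C' →
      Cardinal.mk ↥(C ∩ C') < Cardinal.lift.{1} κ)
    {A : Ordinal → Set Ordinal} (hA : ∀ i < κ.ord, A i ∈ Bfam)
    (hAinj : ∀ i < κ.ord, ∀ j < κ.ord, i ≠ j → A i ≠ A j)
    {i : Ordinal} (hi : i < κ.ord) :
    (A i \ ⋃ j < i, A j) ⊆ Set.Iio κ.ord ∧
      Cardinal.lift.{1} κ ≤ #(A i \ ⋃ j < i, A j : Set Ordinal) := by
  have hsub : (A i \ ⋃ j < i, A j) ⊆ Set.Iio κ.ord :=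
    fun x hx => hBsub (A i) (hA i hi) hx.1
  refine ⟨hsub, ?_⟩
  set U : Set Ordinal := ⋃ j < i, A j with hU
  have hinter : #(A i ∩ U : Set Ordinal) < Cardinal.lift.{1} κ := by
    have h1 : A i ∩ U = ⋃ j : (Set.Iio i), (A i ∩ A j) := by
      ext x
      simp only [hU, Set.mem_inter_iff, Set.mem_iUnion, Subtype.exists, Set.mem_Iio,
        exists_prop]
      tauto
    rw [h1]
    have hidx : #(Set.Iio i) < Cardinal.lift.{1} κ := by
      rw [Ordinal.mk_Iio_ordinal, Cardinal.lift_lt]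
      exact Cardinal.lt_ord.1 hi
    rw [Cardinal.card_iUnion_lt_iff_forall_of_isRegular hreg hidx]
    rintro ⟨j, hj⟩
    have hjκ : j < κ.ord := hj.trans hi
    exact hBad (A i) (hA i hi) (A j) (hA j hjκ) (hAinj i hi j hjκ (ne_of_gt hj))
  by_contra hsm
  push_neg at hsm
  have hcover : #(A i : Set Ordinal) ≤ #(A i ∩ U : Set Ordinal) + #(A i \ U : Set Ordinal) := by
    calc #(A i : Set Ordinal) = #(((A i ∩ U) ∪ (A i \ U) : Set Ordinal)) := by
          rw [Set.inter_union_diff]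
      _ ≤ _ := Cardinal.mk_union_le _ _
  rw [hBcard (A i) (hA i hi)] at hcover
  exact absurd hcover (not_le.2 (Cardinal.add_lt_of_lt hreg.1 hinter hsm))

end Stmt12Aux

open Stmt12Aux in
theorem stmt12 (κ : Cardinal.{0}) (hκ : Cardinal.aleph0 < κ) (D : NormalUltrafilterOn κ)
    -- `Bfam` is a κ-almost disjoint family on κ:
    (Bfam : Set (Set Ordinal))
    (hBsub : ∀ C ∈ Bfam, C ⊆ Set.Iio κ.ord)
    (hBcard : ∀ C ∈ Bfam, Cardinal.mk C = Cardinal.lift.{1} κ)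
    (hBad : ∀ C ∈ Bfam, ∀ C' ∈ Bfam, C ≠ C' →
      Cardinal.mk ↥(C ∩ C') < Cardinal.lift.{1} κ)
    -- `(A i : i < κ)` is a sequence of pairwise distinct members of `Bfam`:
    (A : Ordinal → Set Ordinal) (hA : ∀ i < κ.ord, A i ∈ Bfam)
    (hAinj : ∀ i < κ.ord, ∀ j < κ.ord, i ≠ j → A i ≠ A j)
    :
    (∀ C ∈ Bfam, ∃ A₀ ∈ D.sets, Sset A A₀ ∩ C = ∅) ∧
    (∀ C ∈ Bfam, C ∉ Eset κ D A) := by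
  classical
  have hreg : (Cardinal.lift.{1} κ).IsRegular := lift_isRegular (kappa_regular D hκ)
  have part1 : ∀ C ∈ Bfam, ∃ A₀ ∈ D.sets, Sset A A₀ ∩ C = ∅ := by
    intro C hC
    have key : ∀ i, i < κ.ord → A i ≠ C → ∃ b, b < κ.ord ∧
        ∀ α < κ.ord, Fseq A i α ∈ C → α < b := by
      intro i hi hne
      obtain ⟨hTsub, hTbig⟩ := Tset_big hκ hreg hBsub hBcard hBad hA hAinj hi
      have henum := enum_spec hκ hreg hTsub hTbig
      set bad : Set Ordinal := {α | α < κ.ord ∧ Fseq A i α ∈ C} with hbad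
      have hbadsub : bad ⊆ Set.Iio κ.ord := fun α hα => hα.1
      have hbadsm : Cardinal.mk ↥bad < Cardinal.lift.{1} κ := by
        have hinj : Function.Injective (fun α : bad =>
            (⟨Fseq A i α, α.2.2, (henum α α.2.1).1⟩ :
              (C ∩ (A i \ ⋃ j < i, A j) : Set Ordinal))) := by
          rintro ⟨α, hα⟩ ⟨α', hα'⟩ h
          simp only [Subtype.mk.injEq] at h ⊢
          rcases lt_trichotomy α α' with hlt | heq | hgt
          · exact absurd h (ne_of_lt ((henum α' hα'.1).2 α hlt))
          · exact heq
          · exact absurd h.symm (ne_of_lt ((henum α hα.1).2 α' hgt))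
        calc Cardinal.mk ↥bad ≤ Cardinal.mk ↥(C ∩ (A i \ ⋃ j < i, A j) : Set Ordinal) :=
              Cardinal.mk_le_of_injective hinj
          _ ≤ Cardinal.mk ↥(C ∩ A i : Set Ordinal) :=
              Cardinal.mk_le_mk_of_subset (Set.inter_subset_inter_right _ Set.diff_subset)
          _ < Cardinal.lift.{1} κ := hBad C hC (A i) (hA i hi) (Ne.symm hne)
      obtain ⟨β, hβκ, hβ⟩ := exists_bound hκ hreg hbadsub hbadsm
      exact ⟨β, hβκ, fun α hα hmem => hβ α ⟨hα, hmem⟩⟩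
    choose! b hb1 hb2 using key
    set hfun : Ordinal → Ordinal := fun i => if A i = C then 0 else b i with hfdef
    have hhf : ∀ i < κ.ord, hfun i < κ.ord := by
      intro i hi
      rw [hfdef]
      by_cases hc : A i = C
      · simp only [if_pos hc]
        exact Cardinal.lt_ord.2 (by simpa using hκ.trans_le' Cardinal.aleph0_pos.le)
      · simp only [if_neg hc]
        exact hb1 i hi hc
    have hClmem := club_mem D hκ hfun hhf
    set Cl : Set Ordinal := {α | α < κ.ord ∧ ∀ i < α, hfun i ≤ α} with hCldef
    have hdisj : ∀ W : Set Ordinal, W ⊆ Cl → (∀ i ∈ W, A i ≠ C) → Sset A W ∩ C = ∅ := by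
      intro W hWCl hWC
      ext β
      simp only [Set.mem_inter_iff, Set.mem_empty_iff_false, iff_false, not_and]
      rintro ⟨i, α, hiW, hαW, hiα, rfl⟩ hβC
      have hαCl := hWCl hαW
      have hiκ : i < κ.ord := hiα.trans hαCl.1
      have hne := hWC i hiW
      have hlt : α < b i := hb2 i hiκ hne α hαCl.1 hβC
      have hle : hfun i ≤ α := hαCl.2 i hiα
      rw [hfdef] at hle
      simp only [if_neg hne] at hle
      exact absurd hlt (not_lt.2 hle)
    by_cases hex : ∃ i, i < κ.ord ∧ A i = C
    · obtain ⟨i₀, hi₀κ, hi₀⟩ := hex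
      refine ⟨Cl ∩ (Set.Iio κ.ord \ {i₀}), inter_mem D hκ hClmem (D.nonprincipal i₀),
        hdisj _ Set.inter_subset_left ?_⟩
      rintro i ⟨hiCl, hiκ, hii₀⟩ hAiC
      have hii : i = i₀ := by
        by_contra hne
        exact hAinj i hiκ i₀ hi₀κ hne (hAiC.trans hi₀.symm)
      exact hii₀ (by simp [hii])
    · push_neg at hex
      exact ⟨Cl, hClmem, hdisj _ le_rfl (fun i hi hAiC => hex i hi.1 hAiC)⟩
  refine ⟨part1, ?_⟩
  intro C hC hmem
  obtain ⟨hCsub, C', hC', hSC⟩ := hmem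
  obtain ⟨A₀, hA₀, hdisj⟩ := part1 C hC
  have hW : C' ∩ A₀ ∈ D.sets := inter_mem D hκ hC' hA₀
  have h2 : (1 : Cardinal.{1}) < Cardinal.mk ↥(C' ∩ A₀ : Set Ordinal) :=
    lt_of_lt_of_le (lt_of_lt_of_le Cardinal.one_lt_aleph0 (aleph0_lt_lift' hκ).le)
      (mem_card_ge D hκ hW)
  rw [Cardinal.one_lt_iff_nontrivial] at h2
  obtain ⟨⟨x, hx⟩, ⟨y, hy⟩, hxy⟩ := h2
  have hxy' : x ≠ y := fun h => hxy (Subtype.ext h)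
  have keyf : ∀ a b : Ordinal, a ∈ C' ∩ A₀ → b ∈ C' ∩ A₀ → a < b → False := by
    intro a c ha hc hac
    have hβ1 : Fseq A a c ∈ Sset A C' := ⟨a, c, ha.1, hc.1, hac, rfl⟩
    have hβ2 : Fseq A a c ∈ Sset A A₀ := ⟨a, c, ha.2, hc.2, hac, rfl⟩
    exact Set.eq_empty_iff_forall_notMem.1 hdisj _ ⟨hβ2, hSC hβ1⟩
  rcases hxy'.lt_or_gt with hlt | hlt
  · exact keyf x y hx hy hlt
  · exact keyf y x hy hx hlt
end
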